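/- arXiv:1710.10476 — 2 statements merged into one kernel-verified Lean document; each statement's English description precedes it below -/
import Mathlib

section
/- Let K be a nearly locally presentable category in which all coproduct injections are monomorphisms. Then every object of K is nearly presentable, i.e., nearly μ-presentable for some regular cardinal μ. -/
universe w v u u₁ u₂

open CategoryTheory CategoryTheory.Limits Opposite

namespace NLP

variable {C : Type u} [Category.{v} C]

/-- The poset of subsets of `I` of cardinality `< κ`, ordered by inclusion. -/
abbrev SmallSub (κ : Cardinal.{w}) (I : Type w) : Type w :=
  {J : Set I // Cardinal.mk J < κ}

section
variable [HasCoproducts.{w} C]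

/-- The diagram of subcoproducts `∐_{j ∈ J} K_j`, for `J ⊆ I` with `|J| < κ`,
with subcoproduct injections as connecting morphisms. -/
noncomputable def subDiag (κ : Cardinal.{w}) {I : Type w} (K : I → C) :
    SmallSub κ I ⥤ C where
  obj J := ∐ (fun j : J.1 => K j)
  map {J J'} f :=
    Sigma.desc (fun j => Sigma.ι (fun j' : J'.1 => K j') ⟨j.1, leOfHom f j.2⟩)
  map_id J := by
    ext j
    simp
  map_comp {J J' J''} f g := by
    ext j
    simp

/-- The cocone on the subcoproduct diagram with vertex the full coproduct `∐ K`;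
this is the "special κ-directed colimit" expressing `∐ K` as the κ-directed colimit
of its subcoproducts of size `< κ`. -/
noncomputable def subCocone (κ : Cardinal.{w}) {I : Type w} (K : I → C) :
    Cocone (subDiag (C := C) κ K) where
  pt := ∐ K
  ι :=
    { app := fun J => Sigma.desc (fun j => Sigma.ι K j.1)
      naturality := by
        intro J J' f
        dsimp only [subDiag]
        ext j
        simp }

/-- The subcoproduct injection `∐_{j ∈ J} K_j ⟶ ∐_{i ∈ I} K_i`. -/
noncomputable def subInj (κ : Cardinal.{w}) {I : Type w} (K : I → C) (J : SmallSub κ I) :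
    (∐ fun j : J.1 => K j) ⟶ ∐ K :=
  Sigma.desc (fun j => Sigma.ι K j.1)

/-- An object `A` is nearly `κ`-presentable if its hom-functor `K(A,-)` preserves
special `κ`-directed colimits. -/
def NearlyPresentable (κ : Cardinal.{w}) (A : C) : Prop :=
  ∀ {I : Type w} (K : I → C),
    Nonempty (IsColimit ((coyoneda.obj (op A)).mapCocone (subCocone κ K)))

/-- `C` has monomorphisms stable under special `κ`-directed colimits. -/
def MonosStableUnderSpecial (κ : Cardinal.{w}) : Prop :=
  ∀ {I : Type w} (K : I → C) {X : C} (f : (∐ K) ⟶ X),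
    (∀ J : SmallSub κ I, Mono (subInj (C := C) κ K J ≫ f)) → Mono f

end

/-- A preordered set is `κ`-directed if every subset of cardinality `< κ` has
an upper bound. -/
def IsCardinalDirected (κ : Cardinal.{w}) (J : Type w) [Preorder J] : Prop :=
  ∀ S : Set J, Cardinal.mk S < κ → ∃ j : J, ∀ s ∈ S, s ≤ j

/-- An object `A` is `κ`-presentable if its hom-functor preserves `κ`-directed colimits. -/
def PresentableObj (κ : Cardinal.{v}) (A : C) : Prop :=
  ∀ (J : Type v) [PartialOrder J], IsCardinalDirected κ J →
    Nonempty (PreservesColimitsOfShape J (coyoneda.obj (op A)))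

/-- The restricted Yoneda functor `E_S : C ⥤ Set^{S^op}` for a full subcategory
on a set `S` of objects. -/
def restrictedYoneda (S : Set C) : C ⥤ ((ObjectProperty.FullSubcategory (· ∈ S))ᵒᵖ ⥤ Type v) :=
  yoneda ⋙ (Functor.whiskeringLeft (ObjectProperty.FullSubcategory (· ∈ S))ᵒᵖ Cᵒᵖ (Type v)).obj
    (ObjectProperty.ι (· ∈ S)).op

/-- A set `S` of objects is a strong generator if it is small and the restricted
Yoneda functor `E_S : C ⥤ Set^{S^op}` is faithful and conservative. -/
structure IsStrongGenerator (S : Set C) : Prop where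
  small : Small.{v} S
  faithful : (restrictedYoneda S).Faithful
  reflectsIsos : (restrictedYoneda S).ReflectsIsomorphisms

/-- A set `S` of objects is dense if the restricted Yoneda functor
`E_S : C ⥤ Set^{S^op}` is fully faithful. -/
def IsDenseSub (S : Set C) : Prop :=
  (restrictedYoneda S).Full ∧ (restrictedYoneda S).Faithful

/-- A category is weakly co-wellpowered if every object has only a set of strong
quotients. -/
def WeaklyCoWellPowered (C : Type u) [Category.{v} C] : Prop :=
  ∀ X : C, ∃ (ι : Type v) (Z : ι → C) (p : ∀ i, X ⟶ Z i),
    (∀ i, StrongEpi (p i)) ∧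
    ∀ (Y : C) (f : X ⟶ Y), StrongEpi f → ∃ (i : ι) (e : Z i ≅ Y), p i ≫ e.hom = f

/-- A cocomplete category is nearly locally `κ`-presentable if it is weakly
co-wellpowered and has a strong generator consisting of nearly `κ`-presentable
objects. -/
structure IsNearlyLocallyPresentable (κ : Cardinal.{v}) (C : Type u) [Category.{v} C] : Prop where
  isRegular : κ.IsRegular
  cocomplete : HasColimitsOfSize.{v, v} C
  wcwp : WeaklyCoWellPowered C
  exists_gen : ∃ S : Set C, IsStrongGenerator S ∧
    ∀ A ∈ S, haveI := cocomplete; NearlyPresentable κ A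

/-- A category is locally `κ`-presentable if it is cocomplete and has a strong
generator consisting of `κ`-presentable objects. -/
structure IsLocallyPresentable (κ : Cardinal.{v}) (C : Type u) [Category.{v} C] : Prop where
  isRegular : κ.IsRegular
  cocomplete : HasColimitsOfSize.{v, v} C
  exists_gen : ∃ S : Set C, IsStrongGenerator S ∧ ∀ A ∈ S, PresentableObj κ A

/-- A category has regular factorizations if every morphism factors as a regular
epimorphism followed by a monomorphism. -/
def HasRegularFactorizations (C : Type u) [Category.{v} C] : Prop :=
  ∀ ⦃X Y : C⦄ (f : X ⟶ Y), ∃ (Z : C) (e : X ⟶ Z) (m : Z ⟶ Y),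
    Nonempty (RegularEpi e) ∧ Mono m ∧ e ≫ m = f

/-- A category has (strong epi, mono)-factorizations if every morphism factors as
a strong epimorphism followed by a monomorphism. -/
def HasStrongEpiMonoFacts (C : Type u) [Category.{v} C] : Prop :=
  ∀ ⦃X Y : C⦄ (f : X ⟶ Y), ∃ (Z : C) (e : X ⟶ Z) (m : Z ⟶ Y),
    StrongEpi e ∧ Mono m ∧ e ≫ m = f

/-- A class of objects `T` is closed under colimits if the vertex of any colimit
cocone on a small diagram with values in `T` belongs to `T`. -/
def ClosedUnderColimits (T : Set C) : Prop :=
  ∀ {J : Type v} [SmallCategory J] (F : J ⥤ C), (∀ j, F.obj j ∈ T) →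
    ∀ (c : Cocone F), IsColimit c → c.pt ∈ T

end NLP

/-!
Write `X` as a strong quotient `e : ∐ᵢ Gᵢ ⟶ X` of a coproduct of `ν` generators, each nearly
`κ`-presentable. That `e` is a strong epimorphism uses weak co-wellpoweredness: it provides
(strong epi, mono)-factorizations, and a mono through which every map from a generator factors is
an isomorphism. Now take `μ` regular with `ν · κ < μ`. Given `f : X ⟶ ∐ K`, each `Gᵢ ⟶ ∐ K`
factors through a subcoproduct of size `< κ`, so `e ≫ f` factors through their union, of size
`< μ`. Subcoproduct injections are monomorphisms, so the diagonal fill-in for the strong epi `e`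
factors `f` itself, and two factorizations of `f` agree after enlarging to a common subcoproduct.
-/

namespace NLP

variable {C : Type u} [Category.{v} C]

section Subcoproducts

variable [HasCoproducts.{w} C]

lemma monoCoprod_of_mono_ι (hmono : ∀ {I : Type w} (K : I → C) (i : I), Mono (Sigma.ι K i)) :
    MonoCoprod C := by
  refine MonoCoprod.mk' fun A B => ?_
  let F : ULift.{w} Bool → C := fun b => cond b.down A B
  refine ⟨BinaryCofan.mk (P := ∐ F) (Sigma.ι F ⟨true⟩) (Sigma.ι F ⟨false⟩),
    BinaryCofan.IsColimit.mk _
      (fun f g => Sigma.desc (f := F) fun b => match b with | ⟨true⟩ => f | ⟨false⟩ => g)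
      (fun _ _ => Sigma.ι_desc _ _) (fun _ _ => Sigma.ι_desc _ _) ?_, hmono F _⟩
  intro T f g m hf hg
  refine Sigma.hom_ext (f := F) _ _ fun ⟨b⟩ => ?_
  cases b
  · rw [Sigma.ι_desc]; exact hg
  · rw [Sigma.ι_desc]; exact hf

lemma mono_sigmaDesc_ι_val [MonoCoprod C] {I : Type w} (K : I → C) (J : Set I) :
    Mono (Sigma.desc fun j : J => Sigma.ι K j) :=
  MonoCoprod.mono_of_injective' K Subtype.val Subtype.val_injective

lemma mono_subInj [MonoCoprod C] (κ : Cardinal.{w}) {I : Type w} (K : I → C) (J : SmallSub κ I) :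
    Mono (subInj κ K J) :=
  mono_sigmaDesc_ι_val K J.1

lemma map_comp_subInj (κ : Cardinal.{w}) {I : Type w} (K : I → C) {J J' : SmallSub κ I}
    (f : J ⟶ J') : (subDiag κ K).map f ≫ subInj κ K J' = subInj κ K J := by
  dsimp only [subDiag, subInj]
  ext j
  simp

lemma comp_map_comp_subInj (κ : Cardinal.{w}) {I : Type w} (K : I → C) {J J' : SmallSub κ I}
    (f : J ⟶ J') {A : C} (g : A ⟶ (subDiag κ K).obj J) :
    (g ≫ (subDiag κ K).map f) ≫ subInj κ K J' = g ≫ subInj κ K J :=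
  (Category.assoc _ _ _).trans (congrArg (g ≫ ·) (map_comp_subInj κ K f))

def FactorsThroughSub {I : Type w} (K : I → C) (J : Set I) {A : C} (f : A ⟶ ∐ K) : Prop :=
  ∃ g : A ⟶ ∐ fun j : J => K j, g ≫ Sigma.desc (fun j : J => Sigma.ι K j) = f

lemma FactorsThroughSub.of_subset {I : Type w} {K : I → C} {J J' : Set I} (hJ : J ⊆ J') {A : C}
    {f : A ⟶ ∐ K} (hf : FactorsThroughSub K J f) : FactorsThroughSub K J' f := by
  obtain ⟨g, rfl⟩ := hf
  refine ⟨g ≫ Sigma.desc fun j : J => Sigma.ι (fun j' : J' => K j') ⟨j, hJ j.2⟩, ?_⟩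
  rw [Category.assoc]
  congr 1
  ext j
  simp

lemma factorsThroughSub_iUnion {ι : Type w} (G : ι → C) {I : Type w} {K : I → C}
    (J : ι → Set I) {f : ∐ G ⟶ ∐ K} (hf : ∀ i, FactorsThroughSub K (J i) (Sigma.ι G i ≫ f)) :
    FactorsThroughSub K (⋃ i, J i) f := by
  choose g hg using fun i => (hf i).of_subset (Set.subset_iUnion J i)
  exact ⟨Sigma.desc g, Sigma.hom_ext _ _ fun i => by simp [hg]⟩

lemma NearlyPresentable.exists_factorsThroughSub {κ : Cardinal.{w}} {A : C}
    (hA : NearlyPresentable κ A) {I : Type w} (K : I → C) (f : A ⟶ ∐ K) :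
    ∃ J : Set I, Cardinal.mk J < κ ∧ FactorsThroughSub K J f := by
  obtain ⟨J, g, hg⟩ := Types.jointly_surjective_of_isColimit (hA K).some f
  exact ⟨J.1, J.2, g, hg⟩

lemma FactorsThroughSub.of_strongEpi_comp [MonoCoprod C] {I : Type w} {K : I → C} {J : Set I}
    {P A : C} (e : P ⟶ A) [StrongEpi e] {f : A ⟶ ∐ K} (h : FactorsThroughSub K J (e ≫ f)) :
    FactorsThroughSub K J f := by
  obtain ⟨g, hg⟩ := h
  have := mono_sigmaDesc_ι_val K J
  have sq : CommSq g e (Sigma.desc fun j : J => Sigma.ι K j) f := ⟨hg⟩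
  have := (StrongEpi.llp (Sigma.desc fun j : J => Sigma.ι K j)).sq_hasLift sq
  exact ⟨sq.lift, sq.fac_right⟩

lemma nearlyPresentable_of_forall_factorsThroughSub [MonoCoprod C] {μ : Cardinal.{w}}
    (hμ : Cardinal.aleph0 ≤ μ) {A : C}
    (h : ∀ {I : Type w} (K : I → C) (f : A ⟶ ∐ K),
      ∃ J : Set I, Cardinal.mk J < μ ∧ FactorsThroughSub K J f) :
    NearlyPresentable μ A := by
  intro I K
  refine ⟨Types.FilteredColimit.isColimitOf _ _ (fun f => ?_) fun J J' g g' hgg' => ?_⟩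
  · obtain ⟨J, hJ, g, hg⟩ := h K f
    exact ⟨⟨J, hJ⟩, g, hg.symm⟩
  · let J'' : SmallSub μ I := ⟨J.1 ∪ J'.1, (Cardinal.mk_union_le _ _).trans_lt
      (Cardinal.add_lt_of_lt hμ J.2 J'.2)⟩
    refine ⟨J'', homOfLE Set.subset_union_left, homOfLE Set.subset_union_right, ?_⟩
    change g ≫ subInj μ K J = g' ≫ subInj μ K J' at hgg'
    change g ≫ (subDiag μ K).map _ = g' ≫ (subDiag μ K).map _
    have := mono_subInj μ K J''
    exact (cancel_mono (subInj μ K J'')).1 <|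
      (comp_map_comp_subInj μ K _ g).trans (hgg'.trans (comp_map_comp_subInj μ K _ g').symm)

end Subcoproducts

lemma nearlyPresentable_of_strongEpi [HasCoproducts.{w} C] [MonoCoprod C] {κ μ : Cardinal.{w}}
    (hμ : Cardinal.aleph0 ≤ μ) {ι : Type w} (G : ι → C) (hG : ∀ i, NearlyPresentable κ (G i))
    (hικ : Cardinal.mk ι * κ < μ) {X : C} (e : ∐ G ⟶ X) [StrongEpi e] :
    NearlyPresentable μ X := by
  refine nearlyPresentable_of_forall_factorsThroughSub hμ fun K f => ?_
  choose J hJ hf using fun i =>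
    NearlyPresentable.exists_factorsThroughSub (hG i) K (Sigma.ι G i ≫ e ≫ f)
  have hcard : Cardinal.mk (⋃ i, J i) < μ :=
    calc Cardinal.mk (⋃ i, J i) ≤ Cardinal.sum fun i => Cardinal.mk (J i) :=
          Cardinal.mk_iUnion_le_sum_mk
      _ ≤ Cardinal.sum fun _ : ι => κ := Cardinal.sum_le_sum _ _ fun i => (hJ i).le
      _ = Cardinal.mk ι * κ := Cardinal.sum_const' ι κ
      _ < μ := hικ
  exact ⟨_, hcard, (factorsThroughSub_iUnion G J hf).of_strongEpi_comp e⟩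

lemma IsStrongGenerator.isIso_of_mono {S : Set C} (hS : IsStrongGenerator S) {Y X : C}
    (m : Y ⟶ X) [Mono m] (hm : ∀ A ∈ S, ∀ g : A ⟶ X, ∃ g', g' ≫ m = g) : IsIso m := by
  have := hS.reflectsIsos
  have : ∀ A, IsIso (((restrictedYoneda S).map m).app A) := fun A => by
    rw [isIso_iff_bijective]
    exact ⟨fun g₁ g₂ h => (cancel_mono m).1 h, fun g => hm _ A.unop.property g⟩
  have := NatIso.isIso_of_isIso_app ((restrictedYoneda S).map m)
  exact isIso_of_reflects_iso m (restrictedYoneda S)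

lemma strongEpi_widePushout_head {ι : Type*} {P : C} {Z : ι → C} (p : ∀ i, P ⟶ Z i)
    [∀ i, StrongEpi (p i)] [HasWidePushout P Z p] : StrongEpi (WidePushout.head p) := by
  have hι (i) : p i ≫ WidePushout.ι p i = WidePushout.head p := WidePushout.arrow_ι p i
  have : Epi (WidePushout.head p) := ⟨fun u v huv => WidePushout.hom_ext _ _ _
    (fun i => (cancel_epi (p i)).1 (by rw [← Category.assoc, hι, huv, ← Category.assoc, hι]))
    huv⟩
  refine ⟨this, fun U V z _ => ⟨fun {u v} sq => ?_⟩⟩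
  have sqi (i) : CommSq u (p i) z (WidePushout.ι p i ≫ v) :=
    ⟨by rw [sq.w, ← Category.assoc, hι]⟩
  have := fun i => (StrongEpi.llp (f := p i) z).sq_hasLift (sqi i)
  refine ⟨⟨⟨WidePushout.desc u (fun i => (sqi i).lift) (fun i => (sqi i).fac_left),
    WidePushout.head_desc _ _ _ _, WidePushout.hom_ext _ _ _ (fun i => ?_) ?_⟩⟩⟩
  · rw [← Category.assoc, WidePushout.ι_desc, (sqi i).fac_right]
  · rw [← Category.assoc, WidePushout.head_desc, sq.w]

lemma hasStrongEpiMonoFacts_of_weaklyCoWellPowered [HasColimitsOfSize.{v, v} C]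
    (hw : WeaklyCoWellPowered C) : HasStrongEpiMonoFacts C := by
  intro P X e
  obtain ⟨ι, Z, p, hp, hrep⟩ := hw P
  -- Take the wide pushout `W` of all strong quotients of `P` through which `e` factors. If `u, v`
  -- are equalized by `W ⟶ X`, then `P ⟶ W ⟶ coeq u v` is again such a quotient, hence a leg of
  -- the wide pushout, which therefore splits `W ⟶ coeq u v`.
  let Q := {i : ι // ∃ r, p i ≫ r = e}
  let q : ∀ i : Q, P ⟶ Z i.1 := fun i => p i.1
  have : ∀ i, StrongEpi (q i) := fun i => hp i.1
  have := strongEpi_widePushout_head q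
  let r : widePushout P (fun i : Q => Z i.1) q ⟶ X :=
    WidePushout.desc e (fun i => i.2.choose) (fun i => i.2.choose_spec)
  refine ⟨_, WidePushout.head q, r, this, ⟨fun u v huv => ?_⟩,
    WidePushout.head_desc _ _ _ _⟩
  let c := WidePushout.head q ≫ coequalizer.π u v
  obtain ⟨j, ε, hj⟩ := hrep _ c inferInstance
  have hj' : ∃ r', p j ≫ r' = e := ⟨ε.hom ≫ coequalizer.desc r huv, by
    rw [reassoc_of% hj, Category.assoc, coequalizer.π_desc, WidePushout.head_desc]⟩
  have hsplit : coequalizer.π u v ≫ ε.inv ≫ WidePushout.ι q ⟨j, hj'⟩ = 𝟙 _ := by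
    have hc : c ≫ ε.inv = p j := by rw [Iso.comp_inv_eq, hj]
    rw [← cancel_epi (WidePushout.head q), Category.comp_id, ← Category.assoc,
      ← Category.assoc]
    change (c ≫ ε.inv) ≫ _ = _
    rw [hc]
    exact WidePushout.arrow_ι q ⟨j, hj'⟩
  calc u = u ≫ coequalizer.π u v ≫ ε.inv ≫ WidePushout.ι q ⟨j, hj'⟩ := by
        rw [hsplit, Category.comp_id]
    _ = v ≫ coequalizer.π u v ≫ ε.inv ≫ WidePushout.ι q ⟨j, hj'⟩ := by
        rw [coequalizer.condition_assoc]
    _ = v := by rw [hsplit, Category.comp_id]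

lemma strongEpi_of_forall_factors (hfact : HasStrongEpiMonoFacts C) {S : Set C}
    (hS : IsStrongGenerator S) {P X : C} (e : P ⟶ X)
    (he : ∀ A ∈ S, ∀ g : A ⟶ X, ∃ g', g' ≫ e = g) : StrongEpi e := by
  obtain ⟨W, c, m, hc, hm, rfl⟩ := hfact e
  have : IsIso m := hS.isIso_of_mono m fun A hA g => by
    obtain ⟨g', rfl⟩ := he A hA g
    exact ⟨g' ≫ c, Category.assoc _ _ _⟩
  exact strongEpi_comp c m

lemma exists_strongEpi_sigma [HasCoproducts.{v} C] (hfact : HasStrongEpiMonoFacts C)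
    {S : Set C} (hS : IsStrongGenerator S) (X : C) :
    ∃ (ι : Type v) (G : ι → C) (_ : ∀ i, G i ∈ S) (e : ∐ G ⟶ X), StrongEpi e := by
  have := hS.small
  let T := Σ A : S, (A.1 ⟶ X)
  let G : Shrink.{v} T → C := fun t => ((equivShrink T).symm t).1
  refine ⟨Shrink.{v} T, G, fun t => ((equivShrink T).symm t).1.2,
    Sigma.desc fun t => ((equivShrink T).symm t).2, strongEpi_of_forall_factors hfact hS _ ?_⟩
  suffices ∀ p : T, ∃ g', g' ≫ Sigma.desc (fun t => ((equivShrink T).symm t).2) = p.2 from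
    fun A hA g => this ⟨⟨A, hA⟩, g⟩
  intro p
  obtain ⟨t, rfl⟩ := (equivShrink T).symm.surjective p
  exact ⟨Sigma.ι G t, Sigma.ι_desc _ _⟩

end NLP

/-- In a nearly locally presentable category in which all coproduct
injections are monomorphisms, every object is nearly presentable. -/
theorem NLP.stmt12 {C : Type u} [Category.{v} C] (κ : Cardinal.{v})
    (h : IsNearlyLocallyPresentable κ C)
    (hmono : ∀ {I : Type v} (K : I → C) (i : I),
      haveI := h.cocomplete
      Mono (Sigma.ι K i))
    (X : C) :
    ∃ μ : Cardinal.{v}, μ.IsRegular ∧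
      (haveI := h.cocomplete
       NearlyPresentable μ X) := by
  have := h.cocomplete
  have := monoCoprod_of_mono_ι hmono
  obtain ⟨S, hS, hSκ⟩ := h.exists_gen
  obtain ⟨ι, G, hGS, e, he⟩ :=
    exists_strongEpi_sigma (hasStrongEpiMonoFacts_of_weaklyCoWellPowered h.wcwp) hS X
  let ν := max (Cardinal.mk ι * κ) Cardinal.aleph0
  have hν : Cardinal.aleph0 ≤ ν := le_max_right _ _
  exact ⟨Order.succ ν, Cardinal.isRegular_succ hν,
    nearlyPresentable_of_strongEpi (hν.trans (Order.le_succ ν)) G (fun i => hSκ _ (hGS i))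
      ((le_max_left _ _).trans_lt (Order.lt_succ ν)) e⟩
end

section
/- Every nearly locally λ-presentable category has monomorphisms stable under special λ-directed colimits; that is, for every family (K_i)_{i∈I} of objects, every morphism f : ∐_{i∈I} K_i → K whose composition with each subcoproduct injection ∐_{j∈J} K_j → ∐_{i∈I} K_i (J ⊆ I of cardinality less than λ) is a monomorphism is itself a monomorphism. -/
universe w v u u₁ u₂

open CategoryTheory CategoryTheory.Limits Opposite

/-!
A morphism `f : ∐ K ⟶ X` is tested for being mono on maps out of the strong generator, which is
separating. A generator `A` is nearly `κ`-presentable, so any two maps `A ⟶ ∐ K` factor through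
subcoproducts of size `< κ`, and since `κ` is infinite through a common one, `∐_{j ∈ J} K_j`.
There `subInj J ≫ f` is mono by hypothesis, so the two maps agree once they agree after `f`.
-/

namespace NLP

open scoped Cardinal

variable {C : Type u} [Category.{v} C]

theorem SmallSub.exists_ge_ge {κ : Cardinal.{w}} (hκ : ℵ₀ ≤ κ) {I : Type w}
    (J₁ J₂ : SmallSub κ I) : ∃ J : SmallSub κ I, J₁ ≤ J ∧ J₂ ≤ J :=
  ⟨⟨J₁.1 ∪ J₂.1, (Cardinal.mk_union_le _ _).trans_lt (Cardinal.add_lt_of_lt hκ J₁.2 J₂.2)⟩,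
    Set.subset_union_left, Set.subset_union_right⟩

theorem IsStrongGenerator.isSeparating {S : Set C} (hS : IsStrongGenerator S) :
    ObjectProperty.IsSeparating (· ∈ S) := by
  intro X Y u v huv
  have := hS.faithful
  apply (restrictedYoneda S).map_injective
  ext A g
  exact huv A.unop.obj A.unop.property g

section
variable [HasCoproducts.{w} C] {κ : Cardinal.{w}} {I : Type w} (K : I → C)

theorem exists_comp_subInj_eq_of_le {J J' : SmallSub κ I} (hJ : J ≤ J') {A : C}
    (p : A ⟶ ∐ fun j : J.1 => K j) :
    ∃ q : A ⟶ ∐ fun j : J'.1 => K j, q ≫ subInj κ K J' = p ≫ subInj κ K J :=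
  ⟨p ≫ (subDiag κ K).map (homOfLE hJ),
    (Category.assoc _ _ _).trans (congrArg (p ≫ ·) ((subCocone κ K).w (homOfLE hJ)))⟩

variable {K}

theorem NearlyPresentable.exists_comp_subInj_eq {A : C} (hA : NearlyPresentable κ A)
    (g : A ⟶ ∐ K) : ∃ (J : SmallSub κ I) (p : A ⟶ ∐ fun j : J.1 => K j), p ≫ subInj κ K J = g :=
  let ⟨hc⟩ := hA K
  Types.jointly_surjective _ hc g

theorem NearlyPresentable.exists_comp_subInj_eq₂ {A : C} (hA : NearlyPresentable κ A)
    (hκ : ℵ₀ ≤ κ) (g₁ g₂ : A ⟶ ∐ K) :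
    ∃ (J : SmallSub κ I) (p₁ p₂ : A ⟶ ∐ fun j : J.1 => K j),
      p₁ ≫ subInj κ K J = g₁ ∧ p₂ ≫ subInj κ K J = g₂ := by
  obtain ⟨J₁, p₁, rfl⟩ := hA.exists_comp_subInj_eq g₁
  obtain ⟨J₂, p₂, rfl⟩ := hA.exists_comp_subInj_eq g₂
  obtain ⟨J, h₁, h₂⟩ := SmallSub.exists_ge_ge hκ J₁ J₂
  obtain ⟨q₁, hq₁⟩ := exists_comp_subInj_eq_of_le K h₁ p₁
  obtain ⟨q₂, hq₂⟩ := exists_comp_subInj_eq_of_le K h₂ p₂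
  exact ⟨J, q₁, q₂, hq₁, hq₂⟩

theorem NearlyPresentable.eq_of_comp_eq_of_mono_subInj_comp {A : C} (hA : NearlyPresentable κ A)
    (hκ : ℵ₀ ≤ κ) {X : C} {f : ∐ K ⟶ X}
    (hf : ∀ J : SmallSub κ I, Mono (subInj κ K J ≫ f))
    {g₁ g₂ : A ⟶ ∐ K} (h : g₁ ≫ f = g₂ ≫ f) : g₁ = g₂ := by
  obtain ⟨J, p₁, p₂, rfl, rfl⟩ := hA.exists_comp_subInj_eq₂ hκ g₁ g₂
  simp only [Category.assoc, cancel_mono] at h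
  rw [h]

end

end NLP

/-- Every nearly locally `κ`-presentable category has monomorphisms
stable under special `κ`-directed colimits. -/
theorem NLP.stmt18 {C : Type u} [Category.{v} C] (κ : Cardinal.{v})
    (h : IsNearlyLocallyPresentable κ C) :
    haveI := h.cocomplete
    MonosStableUnderSpecial (C := C) κ := by
  let := h.cocomplete
  obtain ⟨S, hS, hpres⟩ := h.exists_gen
  intro I K X f hf
  exact (hS.isSeparating.mono_iff f).2 fun A hA _ _ =>
    NearlyPresentable.eq_of_comp_eq_of_mono_subInj_comp (hpres A hA) h.isRegular.aleph0_le hf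
end
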